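/- Let ι be a finite type and let A : ℝ → Matrix ι ι ℝ be continuous such that for every t: A(t)_{ij} ≥ 0 for all i ≠ j and ∑_i A(t)_{ij} = 0 for every j. Let t₀ ∈ ℝ and let π : ℝ → (ι → ℝ) solve π'(t) = A(t) π(t) for t ≥ t₀ with π(t₀) entrywise nonnegative and ∑_i π_i(t₀) = 1. Let S ⊆ ι, let Â(t) be the submatrix of A(t) restricted to S × S, and let π̂ : ℝ → (S → ℝ) solve π̂'(t) = Â(t) π̂(t) with π̂(t₀) equal to the restriction of π(t₀) to S. If at some time T ≥ t₀ one has ∑_{i ∈ S} π̂_i(T) ≥ 1 − δ for some δ ≥ 0, then ∑_{i ∈ S} |π_i(T) − π̂_i(T)| ≤ δ, i.e., the l¹ distance between the restriction of the exact solution to S and the truncated solution is at most δ. -/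

import Mathlib

/-!
The exact solution `π` stays a probability vector: the generator preserves nonnegativity, its
off-diagonal entries being nonnegative, and total mass, its columns summing to zero. The
difference `π|_S - π̂` starts at `0` and solves the truncated equation forced by the inflow
`∑_{j ∉ S} A i j * π j ≥ 0`, so it stays nonnegative as well. Hence the l¹ error is
`∑_{i ∈ S} π i - ∑_{i ∈ S} π̂ i ≤ 1 - (1 - δ)`.

Both nonnegativity statements are instances of one invariance principle for `x' = M x + g` with
`M` having nonnegative off-diagonal entries and `g ≥ 0`: where `x i ≤ 0`, the negative part
of `x' i` is at most `K ∑ⱼ (x j)⁻`, so Grönwall's inequality keeps `∑ᵢ (x i)⁻` at its initial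
value `0`.
-/

open Matrix Finset Filter Set Topology

theorem Filter.eventually_finset_sum_lt {α ι : Type*} {l : Filter α} {s : Finset ι}
    {a : ι → α → ℝ} {B : ι → ℝ} (h : ∀ i ∈ s, ∀ r, B i < r → ∀ᶠ z in l, a i z < r)
    {r : ℝ} (hr : ∑ i ∈ s, B i < r) : ∀ᶠ z in l, ∑ i ∈ s, a i z < r := by
  classical
  induction s using Finset.induction_on generalizing r with
  | empty => exact Eventually.of_forall fun _ => by simpa using hr
  | insert j s hj ih =>
    rw [sum_insert hj] at hr
    obtain ⟨r', hs, hr'⟩ := exists_between (lt_sub_iff_add_lt'.2 hr)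
    filter_upwards [h j (mem_insert_self j s) (r - r') (by linarith),
      ih (fun i hi => h i (mem_insert_of_mem hi)) hs] with z hjz hsz
    rw [sum_insert hj]
    linarith

theorem mul_negPart_sub_negPart_le {c : ℝ} (hc : 0 ≤ c) (a b : ℝ) :
    c * (a⁻ - b⁻) ≤ (c * (a - b))⁻ := by
  have hsub : a⁻ - b⁻ ≤ (a - b)⁻ := by
    simp only [negPart_def]
    grind
  calc c * (a⁻ - b⁻) ≤ c * (a - b)⁻ := by gcongr
    _ = (c * (a - b))⁻ := by
      simp only [negPart_def]
      rw [mul_max_of_nonneg _ _ hc, mul_neg, mul_zero]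

theorem eventually_slope_negPart_lt {x : ℝ → ℝ} {d s r : ℝ}
    (hx : HasDerivWithinAt x d (Ioi s) s) (hr : (if x s ≤ 0 then d⁻ else 0) < r) :
    ∀ᶠ z in 𝓝[>] s, (z - s)⁻¹ * ((x z)⁻ - (x s)⁻) < r := by
  split_ifs at hr with hxs
  · have hslope : Tendsto (fun z => (z - s)⁻¹ * (x z - x s)) (𝓝[>] s) (𝓝 d) :=
      (hasDerivWithinAt_iff_tendsto_slope' (lt_irrefl s)).1 hx
    filter_upwards [((continuous_negPart.tendsto d).comp hslope).eventually_lt_const hr,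
      self_mem_nhdsWithin] with z hz hsz
    exact (mul_negPart_sub_negPart_le (inv_nonneg.2 (sub_nonneg.2 hsz.le)) _ _).trans_lt hz
  · filter_upwards [hx.continuousWithinAt.eventually_const_lt (not_le.1 hxs)] with z hz
    simpa [negPart_eq_zero.2 hz.le, negPart_eq_zero.2 (not_le.1 hxs).le] using hr

theorem negPart_mulVec_add_apply_le {ι : Type*} [Fintype ι] {M : Matrix ι ι ℝ} {x g : ι → ℝ}
    {K : ℝ} {i : ι} (hoff : ∀ j, i ≠ j → 0 ≤ M i j) (hK : ∀ j, |M i j| ≤ K) (hg : 0 ≤ g i)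
    (hx : x i ≤ 0) : ((M *ᵥ x + g) i)⁻ ≤ K * ∑ j, (x j)⁻ := by
  have hterm : ∀ j, -(M i j * x j) ≤ K * (x j)⁻ := by
    intro j
    rcases le_or_gt (x j) 0 with hxj | hxj
    · rw [negPart_eq_neg.2 hxj, ← mul_neg]
      exact mul_le_mul_of_nonneg_right ((le_abs_self _).trans (hK j)) (neg_nonneg.2 hxj)
    · have hij : i ≠ j := by rintro rfl; linarith
      rw [negPart_eq_zero.2 hxj.le, mul_zero, neg_nonpos]
      exact mul_nonneg (hoff j hij) hxj.le
  have hK₀ : 0 ≤ K := (abs_nonneg _).trans (hK i)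
  rw [negPart_def, mul_sum]
  refine max_le ?_ (sum_nonneg fun j _ => mul_nonneg hK₀ (negPart_nonneg _))
  calc -(M *ᵥ x + g) i ≤ -(M *ᵥ x) i := by simp [hg]
    _ = ∑ j, -(M i j * x j) := by simp [mulVec, dotProduct]
    _ ≤ _ := sum_le_sum fun j _ => hterm j

theorem nonneg_of_hasDerivWithinAt_mulVec_add {ι : Type*} [Fintype ι] {M : ℝ → Matrix ι ι ℝ}
    {g x : ℝ → ι → ℝ} {a b K : ℝ}
    (hx : ∀ t ∈ Icc a b, HasDerivWithinAt x (M t *ᵥ x t + g t) (Icc a b) t)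
    (hoff : ∀ t ∈ Icc a b, ∀ i j, i ≠ j → 0 ≤ M t i j)
    (hK : ∀ t ∈ Icc a b, ∀ i j, |M t i j| ≤ K) (hg : ∀ t ∈ Icc a b, 0 ≤ g t)
    (hx₀ : 0 ≤ x a) : ∀ t ∈ Icc a b, 0 ≤ x t := by
  set f : ℝ → ℝ := fun t => ∑ i, (x t i)⁻
  set f' : ℝ → ℝ := fun t => ∑ i, if x t i ≤ 0 then ((M t *ᵥ x t + g t) i)⁻ else 0
  have hf_cont : ContinuousOn f (Icc a b) := continuousOn_finsetSum _ fun i _ =>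
    continuous_negPart.comp_continuousOn fun t ht =>
      continuousWithinAt_pi.1 (hx t ht).continuousWithinAt i
  have hf_slope : ∀ s ∈ Ico a b, ∀ r, f' s < r →
      ∃ᶠ z in 𝓝[>] s, (z - s)⁻¹ * (f z - f s) < r := by
    intro s hs r hr
    have hxi : ∀ i, HasDerivWithinAt (x · i) ((M s *ᵥ x s + g s) i) (Ioi s) s := fun i =>
      (hasDerivWithinAt_pi.1 (hx s (Ico_subset_Icc_self hs)) i).mono_of_mem_nhdsWithin
        (Icc_mem_nhdsGT_of_mem hs)
    refine (Filter.eventually_finset_sum_lt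
      (fun i _ r hr => eventually_slope_negPart_lt (hxi i) hr) hr).frequently.mono ?_
    intro z hz
    rwa [← sum_sub_distrib, mul_sum]
  have hf_bound : ∀ s ∈ Ico a b, f' s ≤ (Fintype.card ι * K) * f s + 0 := by
    intro s hs
    have hs' := Ico_subset_Icc_self hs
    calc f' s ≤ ∑ _i : ι, K * f s := sum_le_sum fun i _ => by
          split_ifs with hxi
          · exact negPart_mulVec_add_apply_le (hoff s hs' i) (hK s hs' i) (hg s hs' i) hxi
          · exact mul_nonneg ((abs_nonneg _).trans (hK s hs' i i))
              (sum_nonneg fun j _ => negPart_nonneg _)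
      _ = (Fintype.card ι * K) * f s + 0 := by simp [mul_assoc]
  have hf_a : f a ≤ 0 := (sum_eq_zero fun i _ => negPart_eq_zero.2 (hx₀ i)).le
  intro t ht i
  have hft : f t ≤ 0 := by
    simpa [gronwallBound_ε0_δ0] using
      le_gronwallBound_of_liminf_deriv_right_le hf_cont hf_slope hf_a hf_bound t ht
  have hxti : (x t i)⁻ = 0 := (sum_eq_zero_iff_of_nonneg fun j _ => negPart_nonneg (x t j)).1
    (hft.antisymm (sum_nonneg fun j _ => negPart_nonneg _)) i (mem_univ i)
  exact negPart_eq_zero.1 hxti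

theorem Matrix.sum_mulVec_eq_zero {m n R : Type*} [Fintype m] [Fintype n]
    [NonUnitalNonAssocSemiring R] {A : Matrix m n R} (hcol : ∀ j, ∑ i, A i j = 0) (v : n → R) :
    ∑ i, (A *ᵥ v) i = 0 := by
  simp only [mulVec, dotProduct]
  rw [sum_comm]
  simp [← sum_mul, hcol]

theorem sum_eq_of_hasDerivWithinAt_mulVec {ι : Type*} [Fintype ι] {A : ℝ → Matrix ι ι ℝ}
    (hcol : ∀ t j, ∑ i, A t i j = 0) {π : ℝ → ι → ℝ} {a b : ℝ}
    (hπ : ∀ t ∈ Icc a b, HasDerivWithinAt π (A t *ᵥ π t) (Icc a b) t) :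
    ∀ t ∈ Icc a b, ∑ i, π t i = ∑ i, π a i := by
  have hsum : ∀ t ∈ Icc a b, HasDerivWithinAt (fun z => ∑ i, π z i) 0 (Icc a b) t := by
    intro t ht
    simpa [Matrix.sum_mulVec_eq_zero (hcol t)] using
      HasDerivWithinAt.fun_sum fun i (_ : i ∈ Finset.univ) => hasDerivWithinAt_pi.1 (hπ t ht) i
  exact constant_of_has_deriv_right_zero (fun t ht => (hsum t ht).continuousWithinAt)
    fun t ht => (hsum t (Ico_subset_Icc_self ht)).mono_of_mem_nhdsWithin (Icc_mem_nhdsGE_of_mem ht)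

theorem Matrix.mulVec_apply_coe {ι R : Type*} [Fintype ι] [DecidableEq ι]
    [NonUnitalNonAssocSemiring R] (A : Matrix ι ι R) (v : ι → R) (S : Finset ι) (i : S) :
    (A *ᵥ v) i = (A.submatrix (↑) (↑) *ᵥ fun j : S => v j) i + ∑ j ∈ Sᶜ, A i j * v j := by
  simp only [mulVec, dotProduct, submatrix_apply]
  rw [← sum_add_sum_compl S, sum_coe_sort S (fun j => A i j * v j)]

theorem Matrix.exists_abs_apply_le_of_continuousOn {X m n : Type*} [TopologicalSpace X]
    [Fintype m] [Fintype n] {A : X → Matrix m n ℝ} {s : Set X} (hs : IsCompact s)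
    (hA : ContinuousOn A s) : ∃ K, ∀ t ∈ s, ∀ i j, |A t i j| ≤ K := by
  obtain ⟨K, hK⟩ := hs.exists_bound_of_continuousOn (E := m → n → ℝ) hA
  exact ⟨K, fun t ht i j =>
    ((norm_le_pi_norm (A t i) j).trans (norm_le_pi_norm (A t : m → n → ℝ) i)).trans (hK t ht)⟩

theorem hasDerivWithinAt_restrict_sub {ι : Type*} [Fintype ι] [DecidableEq ι]
    {A : Matrix ι ι ℝ} {S : Finset ι} {π : ℝ → ι → ℝ} {πhat : ℝ → S → ℝ} {s : Set ℝ} {t : ℝ}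
    (hπ : HasDerivWithinAt π (A *ᵥ π t) s t)
    (hπhat : HasDerivWithinAt πhat (A.submatrix (↑) (↑) *ᵥ πhat t) s t) :
    HasDerivWithinAt (fun z (i : S) => π z i - πhat z i)
      (A.submatrix (↑) (↑) *ᵥ (fun i : S => π t i - πhat t i) +
        fun i : S => ∑ j ∈ Sᶜ, A i j * π t j) s t := by
  refine ((hasDerivWithinAt_pi.2 fun i : S => hasDerivWithinAt_pi.1 hπ i).sub
    hπhat).congr_deriv ?_
  rw [show (fun i : S => π t i - πhat t i) = (fun i : S => π t i) - πhat t from rfl, mulVec_sub]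
  ext i
  simp only [Pi.add_apply, Pi.sub_apply, mulVec_apply_coe A (π t) S i]
  ring

theorem truncation_le_restrict {ι : Type*} [Fintype ι] [DecidableEq ι] {A : ℝ → Matrix ι ι ℝ}
    {S : Finset ι} {π : ℝ → ι → ℝ} {πhat : ℝ → S → ℝ} {a b K : ℝ}
    (hπ : ∀ t ∈ Icc a b, HasDerivWithinAt π (A t *ᵥ π t) (Icc a b) t)
    (hπhat : ∀ t ∈ Icc a b,
      HasDerivWithinAt πhat ((A t).submatrix (↑) (↑) *ᵥ πhat t) (Icc a b) t)
    (hoff : ∀ t ∈ Icc a b, ∀ i j, i ≠ j → 0 ≤ A t i j)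
    (hK : ∀ t ∈ Icc a b, ∀ i j, |A t i j| ≤ K) (hπ_nonneg : ∀ t ∈ Icc a b, 0 ≤ π t)
    (h₀ : ∀ i : S, πhat a i = π a i) :
    ∀ t ∈ Icc a b, ∀ i : S, πhat t i ≤ π t i := by
  intro t ht i
  refine sub_nonneg.1 (nonneg_of_hasDerivWithinAt_mulVec_add (K := K)
    (fun t ht => hasDerivWithinAt_restrict_sub (hπ t ht) (hπhat t ht)) ?_ ?_ ?_ ?_ t ht i)
  · exact fun t ht i j hij => hoff t ht i j (Subtype.coe_injective.ne hij)
  · exact fun t ht i j => hK t ht i j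
  · exact fun t ht i => sum_nonneg fun j hj =>
      mul_nonneg (hoff t ht i j fun h => mem_compl.1 hj (h ▸ i.2)) (hπ_nonneg t ht j)
  · exact fun i => sub_nonneg.2 (h₀ i).le

theorem cme_truncation_l1_error_general
    {ι : Type*} [Fintype ι] [DecidableEq ι]
    (A : ℝ → Matrix ι ι ℝ) (hA : Continuous A)
    (hoff : ∀ (t : ℝ) (i j : ι), i ≠ j → 0 ≤ A t i j)
    (hcol : ∀ (t : ℝ) (j : ι), ∑ i, A t i j = 0)
    (t₀ : ℝ) (π : ℝ → ι → ℝ)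
    (hπ : ∀ t : ℝ, t₀ ≤ t → HasDerivWithinAt π (A t *ᵥ π t) (Set.Ici t₀) t)
    (hπ0 : ∀ i : ι, 0 ≤ π t₀ i) (hπ0sum : ∑ i, π t₀ i = 1)
    (S : Finset ι)
    (Ahat : ℝ → Matrix S S ℝ)
    (hAhat : ∀ (t : ℝ) (i j : S), Ahat t i j = A t i j)
    (πhat : ℝ → S → ℝ)
    (hπhat : ∀ t : ℝ, t₀ ≤ t →
      HasDerivWithinAt πhat (Ahat t *ᵥ πhat t) (Set.Ici t₀) t)
    (hπhat0 : ∀ i : S, πhat t₀ i = π t₀ i)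
    (T δ : ℝ) (hT : t₀ ≤ T)
    (hmass : 1 - δ ≤ ∑ i : S, πhat T i) :
    ∑ i : S, |π T i - πhat T i| ≤ δ := by
  have hT' : T ∈ Icc t₀ T := right_mem_Icc.2 hT
  have hπ' : ∀ t ∈ Icc t₀ T, HasDerivWithinAt π (A t *ᵥ π t) (Icc t₀ T) t :=
    fun t ht => (hπ t ht.1).mono Icc_subset_Ici_self
  have hAhat' : ∀ t, Ahat t = (A t).submatrix (↑) (↑) := fun t => Matrix.ext (hAhat t)
  obtain ⟨K, hK⟩ := exists_abs_apply_le_of_continuousOn isCompact_Icc hA.continuousOn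
  have hπ_nonneg : ∀ t ∈ Icc t₀ T, 0 ≤ π t :=
    nonneg_of_hasDerivWithinAt_mulVec_add (g := 0) (fun t ht => by simpa using hπ' t ht)
      (fun t _ => hoff t) hK (fun _ _ => le_rfl) hπ0
  have hπ_sum : ∑ i, π T i = 1 := hπ0sum ▸ sum_eq_of_hasDerivWithinAt_mulVec hcol hπ' T hT'
  have hdom : ∀ i : S, πhat T i ≤ π T i :=
    truncation_le_restrict hπ' (fun t ht => hAhat' t ▸ (hπhat t ht.1).mono Icc_subset_Ici_self)
      (fun t _ => hoff t) hK hπ_nonneg hπhat0 T hT'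
  calc ∑ i : S, |π T i - πhat T i| = ∑ i ∈ S, π T i - ∑ i : S, πhat T i := by
        rw [← sum_coe_sort S, ← sum_sub_distrib]
        exact sum_congr rfl fun i _ => abs_of_nonneg (sub_nonneg.2 (hdom i))
    _ ≤ ∑ i, π T i - (1 - δ) :=
        sub_le_sub (sum_le_sum_of_subset_of_nonneg (subset_univ S) fun i _ _ => hπ_nonneg T hT' i)
          hmass
    _ = δ := by rw [hπ_sum]; ring

/-- l¹ error certificate for the truncated master equation: if the truncated solution
retains mass at least `1 - δ` at time `T`, then the l¹ distance between the restriction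
of the exact solution to the retained set `S` and the truncated solution is at most `δ`. -/
theorem cme_truncation_l1_error
    {ι : Type*} [Fintype ι] [DecidableEq ι]
    (A : ℝ → Matrix ι ι ℝ) (hA : Continuous A)
    (hoff : ∀ (t : ℝ) (i j : ι), i ≠ j → 0 ≤ A t i j)
    (hcol : ∀ (t : ℝ) (j : ι), ∑ i, A t i j = 0)
    (t₀ : ℝ) (π : ℝ → ι → ℝ)
    (hπ : ∀ t : ℝ, t₀ ≤ t → HasDerivWithinAt π (A t *ᵥ π t) (Set.Ici t₀) t)
    (hπ0 : ∀ i : ι, 0 ≤ π t₀ i) (hπ0sum : ∑ i, π t₀ i = 1)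
    (S : Finset ι)
    (Ahat : ℝ → Matrix S S ℝ)
    (hAhat : ∀ (t : ℝ) (i j : S), Ahat t i j = A t i j)
    (πhat : ℝ → S → ℝ)
    (hπhat : ∀ t : ℝ, t₀ ≤ t →
      HasDerivWithinAt πhat (Ahat t *ᵥ πhat t) (Set.Ici t₀) t)
    (hπhat0 : ∀ i : S, πhat t₀ i = π t₀ i)
    (T δ : ℝ) (hT : t₀ ≤ T) (hδ : 0 ≤ δ)
    (hmass : 1 - δ ≤ ∑ i : S, πhat T i) :
    ∑ i : S, |π T i - πhat T i| ≤ δ :=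
  cme_truncation_l1_error_general A hA hoff hcol t₀ π hπ hπ0 hπ0sum S Ahat hAhat πhat hπhat hπhat0 T
    δ hT hmass
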